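/- Let $A$ be a ring and $Q$ an overring of $A$ such that every nonzero right $A$-submodule of $Q$ has nonzero intersection with $A$, and $Q$ satisfies: for every $q \in Q$ there is a right ideal $I$ of $A$ with $qI \subseteq A$ and $\operatorname{lann}_Q I = 0$, and a left ideal $J$ of $A$ with $Jq \subseteq A$ and $\operatorname{rann}_Q J = 0$. If $A$ satisfies the ACC on right annihilators and on left annihilators, then so does $Q$. -/
import Mathlib


/-- The right annihilator of a subset `X` of a ring. -/
def rAnnSet (R : Type*) [Ring R] (X : Set R) : Set R := {r | ∀ x ∈ X, x * r = 0}

/-- The left annihilator of a subset `X` of a ring. -/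
def lAnnSet (R : Type*) [Ring R] (X : Set R) : Set R := {r | ∀ x ∈ X, r * x = 0}

/-- A ring satisfies the ascending chain condition on right annihilators. -/
def ACCRightAnnihilators (R : Type*) [Ring R] : Prop :=
  ∀ f : ℕ → Set R, (∀ n, ∃ X, f n = rAnnSet R X) → Monotone f →
    ∃ N, ∀ n, N ≤ n → f n = f N

/-- A ring satisfies the ascending chain condition on left annihilators. -/
def ACCLeftAnnihilators (R : Type*) [Ring R] : Prop :=
  ∀ f : ℕ → Set R, (∀ n, ∃ X, f n = lAnnSet R X) → Monotone f →
    ∃ N, ∀ n, N ≤ n → f n = f N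

/-- Let `Q` be an overring of `A` (via the embedding `f`) such that every nonzero right
`A`-submodule of `Q` meets `A` nontrivially, and for each `q ∈ Q` there are a right ideal
`I` of `A` with `qI ⊆ A`, `lann_Q I = 0`, and a left ideal `J` of `A` with `Jq ⊆ A`,
`rann_Q J = 0`. If `A` has ACC on right and left annihilators, so does `Q`. -/
theorem acc_annihilators_of_symmetric_quotient
    {A Q : Type*} [Ring A] [Ring Q] (f : A →+* Q) (hinj : Function.Injective f)
    (hess : ∀ M : AddSubgroup Q, (∀ x ∈ M, ∀ a : A, x * f a ∈ M) → M ≠ ⊥ →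
      ∃ x ∈ M, x ≠ 0 ∧ x ∈ Set.range f)
    (hright : ∀ q : Q, ∃ I : Submodule Aᵐᵒᵖ A,
      (∀ i ∈ I, ∃ a : A, q * f i = f a) ∧ ∀ x : Q, (∀ i ∈ I, x * f i = 0) → x = 0)
    (hleft : ∀ q : Q, ∃ J : Ideal A,
      (∀ j ∈ J, ∃ a : A, f j * q = f a) ∧ ∀ x : Q, (∀ j ∈ J, f j * x = 0) → x = 0)
    (haccr : ACCRightAnnihilators A) (haccl : ACCLeftAnnihilators A) :
    ACCRightAnnihilators Q ∧ ACCLeftAnnihilators Q := by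
  clear hess
  choose J hJ1 hJ2 using hleft
  choose I hI1 hI2 using hright
  constructor
  · -- ACC on right annihilators of Q
    intro g hg hmono
    -- Step 1: each g n is the right annihilator of a subset of f '' A
    have step1 : ∀ n, ∃ S : Set A, g n = rAnnSet Q (f '' S) := by
      intro n
      obtain ⟨X, hX⟩ := hg n
      refine ⟨{a : A | ∃ x ∈ X, ∃ j ∈ J x, f j * x = f a}, ?_⟩
      rw [hX]
      ext q
      simp only [rAnnSet, Set.mem_setOf_eq]
      constructor
      · rintro h y ⟨a, ⟨x, hx, j, hj, hfa⟩, rfl⟩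
        rw [← hfa, mul_assoc, h x hx, mul_zero]
      · intro h x hx
        apply hJ2 x (x * q)
        intro j hj
        obtain ⟨a, ha⟩ := hJ1 x j hj
        rw [← mul_assoc, ha]
        exact h (f a) ⟨a, ⟨x, hx, j, hj, ha⟩, rfl⟩
    choose S hS using step1
    -- Step 2: the traces on A form an ascending chain of right annihilators in A
    set r : ℕ → Set A := fun n => rAnnSet A (S n) with hr
    have hmem : ∀ n (a : A), a ∈ r n ↔ f a ∈ g n := by
      intro n a
      rw [hS]
      simp only [hr, rAnnSet, Set.mem_setOf_eq]
      constructor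
      · rintro h y ⟨s, hs, rfl⟩
        rw [← map_mul, h s hs, map_zero]
      · intro h s hs
        apply hinj
        rw [map_mul, map_zero]
        exact h (f s) ⟨s, hs, rfl⟩
    have hrmono : Monotone r := fun n m hnm a ha => (hmem m a).2 (hmono hnm ((hmem n a).1 ha))
    obtain ⟨N, hN⟩ := haccr r (fun n => ⟨S n, rfl⟩) hrmono
    refine ⟨N, fun n hn => le_antisymm ?_ (hmono hn)⟩
    -- Step 3: g n ⊆ g N
    intro q hq
    rw [hS] at hq ⊢
    rintro y ⟨s, hs, rfl⟩
    apply hI2 q (f s * q)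
    intro i hi
    obtain ⟨a, ha⟩ := hI1 q i hi
    have haN : a ∈ r N := by
      rw [← hN n hn, hmem, ← ha, hS]
      rintro y' ⟨s', hs', rfl⟩
      rw [← mul_assoc, hq (f s') ⟨s', hs', rfl⟩, zero_mul]
    have hsa : s * a = 0 := haN s hs
    rw [mul_assoc, ha, ← map_mul, hsa, map_zero]
  · -- ACC on left annihilators of Q
    intro g hg hmono
    have step1 : ∀ n, ∃ S : Set A, g n = lAnnSet Q (f '' S) := by
      intro n
      obtain ⟨X, hX⟩ := hg n
      refine ⟨{a : A | ∃ x ∈ X, ∃ i ∈ I x, x * f i = f a}, ?_⟩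
      rw [hX]
      ext q
      simp only [lAnnSet, Set.mem_setOf_eq]
      constructor
      · rintro h y ⟨a, ⟨x, hx, i, hi, hfa⟩, rfl⟩
        rw [← hfa, ← mul_assoc, h x hx, zero_mul]
      · intro h x hx
        apply hI2 x (q * x)
        intro i hi
        obtain ⟨a, ha⟩ := hI1 x i hi
        rw [mul_assoc, ha]
        exact h (f a) ⟨a, ⟨x, hx, i, hi, ha⟩, rfl⟩
    choose S hS using step1
    set r : ℕ → Set A := fun n => lAnnSet A (S n) with hr
    have hmem : ∀ n (a : A), a ∈ r n ↔ f a ∈ g n := by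
      intro n a
      rw [hS]
      simp only [hr, lAnnSet, Set.mem_setOf_eq]
      constructor
      · rintro h y ⟨s, hs, rfl⟩
        rw [← map_mul, h s hs, map_zero]
      · intro h s hs
        apply hinj
        rw [map_mul, map_zero]
        exact h (f s) ⟨s, hs, rfl⟩
    have hrmono : Monotone r := fun n m hnm a ha => (hmem m a).2 (hmono hnm ((hmem n a).1 ha))
    obtain ⟨N, hN⟩ := haccl r (fun n => ⟨S n, rfl⟩) hrmono
    refine ⟨N, fun n hn => le_antisymm ?_ (hmono hn)⟩
    intro q hq
    rw [hS] at hq ⊢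
    rintro y ⟨s, hs, rfl⟩
    apply hJ2 q (q * f s)
    intro j hj
    obtain ⟨a, ha⟩ := hJ1 q j hj
    have haN : a ∈ r N := by
      rw [← hN n hn, hmem, ← ha, hS]
      rintro y' ⟨s', hs', rfl⟩
      rw [mul_assoc, hq (f s') ⟨s', hs', rfl⟩, mul_zero]
    have has : a * s = 0 := haN s hs
    rw [← mul_assoc, ha, ← map_mul, has, map_zero]
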